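/- Let D₀ be an oriented graph on n₀ vertices with minimum outdegree d₀ that contains no Seymour vertex. Then for every integer N ≥ 3 there exists a strongly-connected oriented graph D on N·n₀ vertices with minimum outdegree δ⁺(D) = d₀ + n₀ that contains no Seymour vertex. -/

import Mathlib

open Filter

/-- The outneighbourhood `N1(v)` of `v` in the digraph with arc relation `D`. -/
def outNbr {V : Type*} (D : V → V → Prop) (v : V) : Set V := {w | w ≠ v ∧ D v w}

/-- The inneighbourhood `N⁻(v)` of `v`. -/
def inNbr {V : Type*} (D : V → V → Prop) (v : V) : Set V := {w | w ≠ v ∧ D w v}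

/-- The second outneighbourhood `N2(v)` of `v`. -/
def outNbr2 {V : Type*} (D : V → V → Prop) (v : V) : Set V :=
  {w | w ∉ insert v (outNbr D v) ∧ ∃ u ∈ outNbr D v, D u w}

/-- `v` is a Seymour vertex: `|N2(v)| ≥ |N1(v)|`. -/
def SeymourVertex {V : Type*} (D : V → V → Prop) (v : V) : Prop :=
  (outNbr D v).ncard ≤ (outNbr2 D v).ncard

/-- `v` is a Sullivan vertex: `|N2(v)| ≥ |N⁻(v)|`. -/
def SullivanVertex {V : Type*} (D : V → V → Prop) (v : V) : Prop :=
  (inNbr D v).ncard ≤ (outNbr2 D v).ncard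

/-- An oriented graph: an asymmetric (hence irreflexive and loopless) arc relation. -/
def OrientedGraph {V : Type*} (D : V → V → Prop) : Prop := ∀ u v, D u v → ¬ D v u

/-- `D` is an orientation of the simple graph `G`. -/
def Orients {V : Type*} (D : V → V → Prop) (G : SimpleGraph V) : Prop :=
  OrientedGraph D ∧ ∀ u v, G.Adj u v ↔ (D u v ∨ D v u)

/-- Strong connectivity of a digraph: every vertex reaches every other by a directed path. -/
def StrongConn {V : Type*} (D : V → V → Prop) : Prop := ∀ u v, Relation.ReflTransGen D u v

/-- The number of edges of `G` with one endpoint in `A` and the other in `B`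
(counted via ordered pairs; equals `e(A,B)` for disjoint `A`, `B`). -/
noncomputable def eBtw {V : Type*} (G : SimpleGraph V) (A B : Set V) : ℕ :=
  {p : V × V | p.1 ∈ A ∧ p.2 ∈ B ∧ G.Adj p.1 p.2}.ncard

/-- The number of edges of `G` with both endpoints in `A`. -/
noncomputable def eIn {V : Type*} (G : SimpleGraph V) (A : Set V) : ℕ :=
  {e | e ∈ G.edgeSet ∧ ∀ v ∈ e, v ∈ A}.ncard

open scoped Classical in
/-- The probability that the binomial random graph `G(n,p)` satisfies the property `P`. -/
noncomputable def gnpProb (n : ℕ) (p : ℝ) (P : SimpleGraph (Fin n) → Prop) : ℝ :=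
  ∑ G : SimpleGraph (Fin n),
    if P G then p ^ G.edgeSet.ncard * (1 - p) ^ (n.choose 2 - G.edgeSet.ncard) else 0

/-!
In the blow-up, the outneighbourhood of `(i, a)` is `N1(a)` inside copy `i` together with the
whole copy `i + 1`, and its second outneighbourhood is `N2(a)` inside copy `i` together with the
whole copy `i + 2`; these copies are distinct because `N ≥ 3`. Both neighbourhoods thus grow by
exactly `n₀`, so the Seymour vertices of the blow-up are the lifts of those of `D₀`, and the
outdegrees shift by `n₀`. Walking forward around the cycle gives strong connectivity.
-/

open Function

lemma ncard_singleton_prod_union_singleton_prod {γ β : Type*} [Finite β] {i j : γ} (hij : i ≠ j)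
    (S T : Set β) : ({i} ×ˢ S ∪ {j} ×ˢ T).ncard = S.ncard + T.ncard := by
  have hdisj : Disjoint ({i} ×ˢ S) ({j} ×ˢ T) :=
    Set.disjoint_left.2 fun _ hS hT => hij ((Set.mem_singleton_iff.1 hS.1).symm.trans hT.1)
  rw [Set.ncard_union_eq hdisj (Set.toFinite _) (Set.toFinite _), Set.singleton_prod,
    Set.singleton_prod, Set.ncard_image_of_injective _ (Prod.mk_right_injective i),
    Set.ncard_image_of_injective _ (Prod.mk_right_injective j)]

section Relabel

variable {V W : Type*} (e : V ≃ W) {D : W → W → Prop}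

lemma outNbr_onFun_equiv (v : V) : outNbr (D on e) v = e ⁻¹' outNbr D (e v) := by
  ext w
  simp [outNbr, onFun]

lemma outNbr2_onFun_equiv (v : V) : outNbr2 (D on e) v = e ⁻¹' outNbr2 D (e v) := by
  ext w
  simp only [outNbr2, outNbr_onFun_equiv, Set.mem_ofPred_eq, Set.mem_preimage,
    Set.mem_insert_iff, EmbeddingLike.apply_eq_iff_eq, onFun]
  exact and_congr_right fun _ => e.exists_congr_left.trans (by simp)

lemma ncard_outNbr_onFun_equiv (v : V) :
    (outNbr (D on e) v).ncard = (outNbr D (e v)).ncard := by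
  rw [outNbr_onFun_equiv, Set.ncard_preimage_of_injective_subset_range e.injective (by simp)]

lemma seymourVertex_onFun_equiv_iff (v : V) :
    SeymourVertex (D on e) v ↔ SeymourVertex D (e v) := by
  rw [SeymourVertex, SeymourVertex, ncard_outNbr_onFun_equiv, outNbr2_onFun_equiv,
    Set.ncard_preimage_of_injective_subset_range e.injective (by simp)]

lemma StrongConn.onFun_equiv (h : StrongConn D) : StrongConn (D on e) := by
  intro v w
  simpa [onFun] using Relation.ReflTransGen.lift (p := D on e) e.symm
    (fun x y hxy => by simpa [onFun] using hxy) _ _ (h (e v) (e w))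

end Relabel

lemma Fin.add_one_ne_self_of_two_le {N : ℕ} [NeZero N] (hN : 2 ≤ N) (i : Fin N) : i + 1 ≠ i := by
  rw [Ne, add_eq_left, Fin.ext_iff]
  simp [Nat.mod_eq_of_lt hN]

lemma Fin.add_one_add_one_ne_self_of_three_le {N : ℕ} [NeZero N] (hN : 3 ≤ N) (i : Fin N) :
    i + 1 + 1 ≠ i := by
  rw [Ne, add_assoc, add_eq_left, Fin.ext_iff, Fin.val_add, Fin.val_one']
  simp [Nat.mod_eq_of_lt (by omega : 1 < N), Nat.mod_eq_of_lt hN]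

section CycleBlowup

variable {α : Type*} {N : ℕ} [NeZero N] {D₀ : α → α → Prop}

def cycleBlowup (N : ℕ) [NeZero N] (D₀ : α → α → Prop) : Fin N × α → Fin N × α → Prop :=
  fun u w => (u.1 = w.1 ∧ D₀ u.2 w.2) ∨ w.1 = u.1 + 1

lemma orientedGraph_cycleBlowup (hN : 3 ≤ N) (hD₀ : OrientedGraph D₀) :
    OrientedGraph (cycleBlowup N D₀) := by
  have h₁ := Fin.add_one_ne_self_of_two_le (by omega : 2 ≤ N)
  have h₂ := Fin.add_one_add_one_ne_self_of_three_le hN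
  rintro ⟨i, a⟩ ⟨j, b⟩ (⟨rfl, hab⟩ | rfl) (⟨hji, hba⟩ | hij)
  · exact hD₀ a b hab hba
  · exact h₁ i hij.symm
  · exact h₁ i hji
  · exact h₂ i hij.symm

open Fin.NatCast in
lemma reflTransGen_cycleBlowup_add_add_one (i : Fin N) (a b : α) (k : ℕ) :
    Relation.ReflTransGen (cycleBlowup N D₀) (i, a) (i + k + 1, b) := by
  induction k generalizing b with
  | zero => exact .single (.inr (by simp))
  | succ k ih => exact (ih a).tail (.inr (by push_cast; abel))

open Fin.NatCast in
lemma strongConn_cycleBlowup : StrongConn (cycleBlowup N D₀) := by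
  rintro ⟨i, a⟩ ⟨j, b⟩
  have h := reflTransGen_cycleBlowup_add_add_one (D₀ := D₀) i a b (j - i - 1).val
  rwa [Fin.cast_val_eq_self, add_assoc, sub_add_cancel, add_sub_cancel] at h

lemma outNbr_cycleBlowup (hN : 2 ≤ N) (i : Fin N) (a : α) :
    outNbr (cycleBlowup N D₀) (i, a) = {i} ×ˢ outNbr D₀ a ∪ {i + 1} ×ˢ Set.univ := by
  have := Fin.add_one_ne_self_of_two_le hN i
  ext ⟨j, b⟩
  simp only [outNbr, cycleBlowup]
  grind

lemma outNbr2_cycleBlowup (hN : 3 ≤ N) (i : Fin N) (a : α) :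
    outNbr2 (cycleBlowup N D₀) (i, a) = {i} ×ˢ outNbr2 D₀ a ∪ {i + 1 + 1} ×ˢ Set.univ := by
  have h₁ := Fin.add_one_ne_self_of_two_le (by omega) i
  have h₁' := Fin.add_one_ne_self_of_two_le (by omega) (i + 1)
  have h₂ := Fin.add_one_add_one_ne_self_of_three_le hN i
  ext ⟨j, b⟩
  simp only [outNbr2, outNbr_cycleBlowup (by omega : 2 ≤ N)]
  simp only [outNbr, cycleBlowup, Set.mem_insert_iff, Set.mem_union, Set.mem_prod,
    Set.mem_singleton_iff, Set.mem_ofPred_eq, Set.mem_univ, and_true, not_or, Prod.exists,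
    Prod.mk.injEq]
  grind

variable [Finite α]

lemma ncard_outNbr_cycleBlowup (hN : 2 ≤ N) (v : Fin N × α) :
    (outNbr (cycleBlowup N D₀) v).ncard = (outNbr D₀ v.2).ncard + Nat.card α := by
  rw [outNbr_cycleBlowup hN v.1 v.2, ncard_singleton_prod_union_singleton_prod
    (Fin.add_one_ne_self_of_two_le hN v.1).symm, Set.ncard_univ]

lemma ncard_outNbr2_cycleBlowup (hN : 3 ≤ N) (v : Fin N × α) :
    (outNbr2 (cycleBlowup N D₀) v).ncard = (outNbr2 D₀ v.2).ncard + Nat.card α := by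
  rw [outNbr2_cycleBlowup hN v.1 v.2, ncard_singleton_prod_union_singleton_prod
    (Fin.add_one_add_one_ne_self_of_three_le hN v.1).symm, Set.ncard_univ]

lemma seymourVertex_cycleBlowup_iff (hN : 3 ≤ N) (v : Fin N × α) :
    SeymourVertex (cycleBlowup N D₀) v ↔ SeymourVertex D₀ v.2 := by
  rw [SeymourVertex, SeymourVertex, ncard_outNbr_cycleBlowup (by omega),
    ncard_outNbr2_cycleBlowup hN, Nat.add_le_add_iff_right]

end CycleBlowup

/-- blowing up a counterexample `D₀` (with `n₀` vertices and minimum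
outdegree `d₀`) along a consistently-oriented `N`-cycle yields, for every `N ≥ 3`,
a strongly-connected counterexample on `N·n₀` vertices with minimum outdegree `d₀ + n₀`. -/
theorem stmt_5 (n₀ d₀ : ℕ) (D₀ : Fin n₀ → Fin n₀ → Prop) (hD₀ : OrientedGraph D₀)
    (hno : ∀ v, ¬ SeymourVertex D₀ v)
    (hlb : ∀ v, d₀ ≤ (outNbr D₀ v).ncard) (hex : ∃ v, (outNbr D₀ v).ncard = d₀)
    (N : ℕ) (hN : 3 ≤ N) :
    ∃ D : Fin (N * n₀) → Fin (N * n₀) → Prop,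
      OrientedGraph D ∧ StrongConn D ∧
      (∀ v, d₀ + n₀ ≤ (outNbr D v).ncard) ∧
      (∃ v, (outNbr D v).ncard = d₀ + n₀) ∧
      ∀ v, ¬ SeymourVertex D v := by
  have : NeZero N := ⟨by omega⟩
  obtain ⟨v₀, hv₀⟩ := hex
  let e : Fin (N * n₀) ≃ Fin N × Fin n₀ := finProdFinEquiv.symm
  have hdeg (v) : (outNbr (cycleBlowup N D₀ on e) v).ncard = (outNbr D₀ (e v).2).ncard + n₀ := by
    rw [ncard_outNbr_onFun_equiv, ncard_outNbr_cycleBlowup (by omega), Nat.card_fin]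
  refine ⟨cycleBlowup N D₀ on e, fun x y => orientedGraph_cycleBlowup hN hD₀ (e x) (e y),
    strongConn_cycleBlowup.onFun_equiv e, fun v => ?_, ⟨e.symm (0, v₀), ?_⟩, fun v => ?_⟩
  · rw [hdeg]
    exact Nat.add_le_add_right (hlb _) n₀
  · rw [hdeg, Equiv.apply_symm_apply, hv₀]
  · rw [seymourVertex_onFun_equiv_iff, seymourVertex_cycleBlowup_iff hN]
    exact hno _
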